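/- Let K be a convex body in R^d, let x ∈ K, and let x' ∈ M'(x) = M^{1/5}(x). Then x ∈ M^{1/4}(x'). -/

import Mathlib

open Set Metric
open scoped Pointwise

/-- The Macbeath region `M^λ(x) = x + λ((K − x) ∩ (x − K))`. -/
def macbeath {d : ℕ} (K : Set (EuclideanSpace ℝ (Fin d)))
    (x : EuclideanSpace ℝ (Fin d)) (lam : ℝ) : Set (EuclideanSpace ℝ (Fin d)) :=
  (fun v => x + lam • v) '' ((K - {x}) ∩ ({x} - K))

/-!
If `x' = x + λ v` with `x ± v ∈ K`, then `x = x' + λ/(1-λ) • w` for `w = -(1-λ) v`, and the two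
points `x' ± w` are `x + v` and `x + (2λ - 1) v`, both on the segment `[x - v, x + v] ⊆ K`.
For `λ = 1/5` this gives `λ/(1-λ) = 1/4`.
-/

theorem Convex.add_smul_mem_of_abs_le {E : Type*} [AddCommGroup E] [Module ℝ E] {K : Set E}
    (hK : Convex ℝ K) {x v : E} (hp : x + v ∈ K) (hm : x - v ∈ K) {t : ℝ} (ht : |t| ≤ 1) :
    x + t • v ∈ K := by
  obtain ⟨ht₁, ht₂⟩ := abs_le.mp ht
  have h := hK.add_smul_mem hm (y := (2 : ℝ) • v) (by convert hp using 1; module)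
    (t := (1 + t) / 2) ⟨by linarith, by linarith⟩
  convert h using 1
  module

theorem mem_macbeath_iff {d : ℕ} {K : Set (EuclideanSpace ℝ (Fin d))}
    {x y : EuclideanSpace ℝ (Fin d)} {lam : ℝ} :
    y ∈ macbeath K x lam ↔ ∃ v, x + v ∈ K ∧ x - v ∈ K ∧ x + lam • v = y := by
  simp only [macbeath, mem_image, mem_inter_iff, mem_sub, mem_singleton_iff]
  constructor
  · rintro ⟨v, ⟨⟨k, hk, b, hb, hkv⟩, ⟨b', hb', k', hk', hkv'⟩⟩, rfl⟩
    rw [hb] at hkv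
    rw [hb'] at hkv'
    subst hkv
    refine ⟨k - x, by simpa using hk, ?_, rfl⟩
    convert hk' using 1
    rw [← sub_eq_zero, ← sub_eq_zero.mpr hkv']
    abel
  · rintro ⟨v, hp, hm, rfl⟩
    exact ⟨v, ⟨⟨x + v, hp, x, rfl, by abel⟩, ⟨x, rfl, x - v, hm, by abel⟩⟩, rfl⟩

theorem mem_macbeath_of_mem_macbeath {d : ℕ} {K : Set (EuclideanSpace ℝ (Fin d))}
    (hK : Convex ℝ K) {x y : EuclideanSpace ℝ (Fin d)} {lam : ℝ} (h₀ : 0 ≤ lam) (h₁ : lam < 1)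
    (hy : y ∈ macbeath K x lam) : x ∈ macbeath K y (lam / (1 - lam)) := by
  obtain ⟨v, hp, hm, rfl⟩ := mem_macbeath_iff.mp hy
  have hpos : (1 - lam) ≠ 0 := by linarith
  refine mem_macbeath_iff.mpr ⟨-(1 - lam) • v, ?_, ?_, ?_⟩
  · convert hK.add_smul_mem_of_abs_le hp hm (t := 2 * lam - 1)
      (abs_le.mpr ⟨by linarith, by linarith⟩) using 1
    module
  · convert hp using 1
    module
  · rw [smul_smul, mul_neg, div_mul_cancel₀ _ hpos]
    module

theorem mem_macbeath_quarter_general (d : ℕ)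
    (K : Set (EuclideanSpace ℝ (Fin d)))
    (hK_conv : Convex ℝ K)
    (x x' : EuclideanSpace ℝ (Fin d))
    (hx' : x' ∈ macbeath K x (1 / 5)) :
    x ∈ macbeath K x' (1 / 4) := by
  have h := mem_macbeath_of_mem_macbeath hK_conv (by norm_num) (by norm_num) hx'
  rwa [show (1 / 5 : ℝ) / (1 - 1 / 5) = 1 / 4 by norm_num] at h

/-- Lemma `mac3`: if `x ∈ K` and `x' ∈ M'(x) = M^{1/5}(x)`, then
`x ∈ M^{1/4}(x')`. -/
theorem mem_macbeath_quarter (d : ℕ)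
    (K : Set (EuclideanSpace ℝ (Fin d)))
    (hK_compact : IsCompact K) (hK_conv : Convex ℝ K)
    (hK_int : (interior K).Nonempty)
    (x x' : EuclideanSpace ℝ (Fin d)) (hx : x ∈ K)
    (hx' : x' ∈ macbeath K x (1 / 5)) :
    x ∈ macbeath K x' (1 / 4) :=
  mem_macbeath_quarter_general d K hK_conv x x' hx'
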